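/- Let M = {M_u : u ∈ U} be a generalized POVM with respect to J, and let p_u = supp(M_u). Then M is an extreme point of the convex set M_J(A,U) of generalized POVMs if and only if: for any collection {D_u : u ∈ U} with D_u ∈ p_u A p_u, the condition Σ_u D_u ∈ J^⊥ implies D_u = 0 for all u. -/

import Mathlib

open Matrix ComplexOrder

variable {n m : Type*} [Fintype n] [DecidableEq n] [Fintype m] [DecidableEq m]

/-- Partial trace over the first tensor factor `B` of `B ⊗ A`,
realized on matrices indexed by products. -/
noncomputable def ptrace (X : Matrix (m × n) (m × n) ℂ) : Matrix n n ℂ :=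
  Matrix.of fun a b => ∑ i, X (i, a) (i, b)

/-- The Choi matrix of a linear map `Φ : A → B` (on full matrix algebras). -/
noncomputable def choi (Φ : Matrix n n ℂ →ₗ[ℂ] Matrix m m ℂ) : Matrix (m × n) (m × n) ℂ :=
  Matrix.of fun p q => Φ (Matrix.single p.2 q.2 1) p.1 q.1

/-- Hilbert–Schmidt orthogonal complement of a subspace. -/
noncomputable def hsPerp {k : Type*} [Fintype k] (J : Submodule ℂ (Matrix k k ℂ)) :
    Submodule ℂ (Matrix k k ℂ) where
  carrier := {x | ∀ a ∈ J, Matrix.trace (aᴴ * x) = 0}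
  add_mem' := by
    intro x y hx hy a ha
    simp [Matrix.mul_add, hx a ha, hy a ha]
  zero_mem' := by intro a ha; simp
  smul_mem' := by
    intro c x hx a ha
    simp [Matrix.mul_smul, hx a ha]

/-- Hilbert–Schmidt orthogonal complement of the transpose `J^T` of a subspace `J`. -/
def hsPerpT {k : Type*} [Fintype k] (J : Submodule ℂ (Matrix k k ℂ)) : Set (Matrix k k ℂ) :=
  {x | ∀ a ∈ J, Matrix.trace (aᵀᴴ * x) = 0}

/-- A subspace is positively generated if it is spanned by its positive elements. -/
def PositivelyGenerated {k : Type*} [Fintype k] (J : Submodule ℂ (Matrix k k ℂ)) : Prop :=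
  J = Submodule.span ℂ {a : Matrix k k ℂ | a ∈ J ∧ a.PosSemidef}

/-- `P` is the support projection of `X`: a Hermitian idempotent with the same range. -/
def IsSupportProj {k : Type*} [Fintype k] [DecidableEq k] (X P : Matrix k k ℂ) : Prop :=
  P.IsHermitian ∧ P * P = P ∧
    LinearMap.range (Matrix.toLin' P) = LinearMap.range (Matrix.toLin' X)

/-!
If `M` lies in an open segment `(N₁, N₂)` of generalized POVMs, then `ker M_u ⊆ ker N₁_u`, so
`N₁ - M` has `D_u ∈ p_u A p_u` and `∑ D_u ∈ J^⊥`; rigidity forces `N₁ = M`.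

Conversely, `M_u + (1 - p_u)` is invertible, hence bounded below by a positive scalar; compressing
by `p_u` shows that `M_u + s D_u ≥ 0` for all small real `s` whenever `D_u = D_u*` lives in
`p_u A p_u`. So a self-adjoint admissible `D` makes `M ± s D` generalized POVMs, and extremality
gives `D = 0`. Since `J` is spanned by positive elements, it is closed under adjoints, and so is
`J^⊥`; taking real and imaginary parts reduces the general case to the self-adjoint one.
-/

open scoped Topology MatrixOrder Matrix.Norms.L2Operator ComplexStarModule

lemma IsStrictlyPositive.eventually_nonneg_add_smul {A : Type*} [CStarAlgebra A]
    [PartialOrder A] [StarOrderedRing A] {a x : A} (ha : IsStrictlyPositive a)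
    (hx : IsSelfAdjoint x) : ∀ᶠ s : ℝ in 𝓝 0, 0 ≤ a + s • x := by
  nontriviality A
  obtain ⟨r, hr, hra⟩ : ∃ r > 0, algebraMap ℝ A r ≤ a :=
    (CFC.exists_pos_algebraMap_le_iff ha.isSelfAdjoint).2 fun _ ↦ ha.spectrum_pos
  have hsmall : Filter.Tendsto (fun s : ℝ ↦ ‖s • x‖) (𝓝 0) (𝓝 0) := by
    simpa using ((continuous_id.smul continuous_const).norm (f := fun s : ℝ ↦ s • x)).tendsto 0
  filter_upwards [hsmall.eventually (ge_mem_nhds hr)] with s hs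
  calc (0 : A) ≤ algebraMap ℝ A r - algebraMap ℝ A ‖s • x‖ := by
        rw [← map_sub]; exact algebraMap_nonneg A (sub_nonneg.2 hs)
    _ ≤ a + s • x := by
        rw [sub_eq_add_neg]
        exact add_le_add hra ((IsSelfAdjoint.all s).smul hx).neg_algebraMap_norm_le_self

lemma eq_zero_of_add_mem_of_sub_mem_of_mem_extremePoints {𝕜 E : Type*} [Field 𝕜]
    [LinearOrder 𝕜] [IsStrictOrderedRing 𝕜] [AddCommGroup E] [Module 𝕜 E] {A : Set E} {x y : E}
    (hx : x ∈ A.extremePoints 𝕜) (hadd : x + y ∈ A) (hsub : x - y ∈ A) : y = 0 := by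
  have hmid : x ∈ openSegment 𝕜 (x + y) (x - y) :=
    ⟨2⁻¹, 2⁻¹, by norm_num, by norm_num, by norm_num, by module⟩
  simpa using hx.2 hadd hsub hmid

lemma Submodule.eq_zero_of_forall_isSelfAdjoint {A : Type*} [AddCommGroup A] [Module ℂ A]
    [StarAddMonoid A] [StarModule ℂ A] {S : Submodule ℂ A} (hS : ∀ x ∈ S, star x ∈ S)
    (hsa : ∀ x ∈ S, IsSelfAdjoint x → x = 0) {x : A} (hx : x ∈ S) : x = 0 := by
  have hre : (ℜ x : A) ∈ S := by
    rw [realPart_apply_coe]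
    exact S.smul_of_tower_mem _ (S.add_mem hx (hS x hx))
  have him : (ℑ x : A) ∈ S := by
    rw [imaginaryPart_apply_coe]
    exact S.smul_mem _ (S.smul_of_tower_mem _ (S.sub_mem hx (hS x hx)))
  rw [← realPart_add_I_smul_imaginaryPart x, hsa _ hre (ℜ x).2, hsa _ him (ℑ x).2, smul_zero,
    add_zero]

namespace Matrix

variable {k : Type*} [Fintype k]

lemma PosSemidef.mulVec_eq_zero_of_le {𝕜 : Type*} [RCLike 𝕜] {A B : Matrix k k 𝕜}
    (hA : A.PosSemidef) (hAB : (B - A).PosSemidef) {v : k → 𝕜} (hv : B *ᵥ v = 0) : A *ᵥ v = 0 := by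
  refine (hA.dotProduct_mulVec_zero_iff v).1 (le_antisymm ?_ (hA.dotProduct_mulVec_nonneg v))
  have := hAB.dotProduct_mulVec_nonneg v
  rwa [sub_mulVec, hv, zero_sub, dotProduct_neg, neg_nonneg] at this

lemma IsHermitian.mul_mul_eq_of_mul_eq {α : Type*} [Semiring α] [StarRing α]
    {X p : Matrix k k α} (hX : X.IsHermitian) (hp : p.IsHermitian) (h : X * p = X) :
    p * X * p = X := by
  have hpX : p * X = X := by simpa [hp.eq, hX.eq] using congrArg (·ᴴ) h
  rw [hpX, h]

end Matrix

open Matrix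

namespace IsSupportProj

variable {M p : Matrix n n ℂ}

lemma mulVec_eq_self_of_mem_range (hp : IsSupportProj M p) {y : n → ℂ}
    (hy : y ∈ LinearMap.range (toLin' M)) : p *ᵥ y = y := by
  rw [← hp.2.2] at hy
  obtain ⟨z, rfl⟩ := hy
  rw [toLin'_apply, mulVec_mulVec, hp.2.1]

lemma proj_mul (hp : IsSupportProj M p) : p * M = M :=
  ext_iff_mulVec.2 fun v ↦ by
    rw [← mulVec_mulVec]
    exact hp.mulVec_eq_self_of_mem_range ⟨v, toLin'_apply M v⟩

lemma mul_proj (hp : IsSupportProj M p) (hM : M.IsHermitian) : M * p = M := by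
  simpa [hp.1.eq, hM.eq] using congrArg (·ᴴ) hp.proj_mul

lemma proj_mul_proj_of_ker_le (hp : IsSupportProj M p) (hM : M.IsHermitian) {N : Matrix n n ℂ}
    (hN : N.IsHermitian) (hker : ∀ v, M *ᵥ v = 0 → N *ᵥ v = 0) : p * N * p = N := by
  refine hN.mul_mul_eq_of_mul_eq hp.1 (ext_iff_mulVec.2 fun v ↦ ?_)
  have hMv : M *ᵥ (v - p *ᵥ v) = 0 := by
    rw [mulVec_sub, mulVec_mulVec, hp.mul_proj hM, sub_self]
  rw [← mulVec_mulVec, eq_comm, ← sub_eq_zero, ← mulVec_sub]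
  exact hker _ hMv

lemma posDef_add_one_sub (hp : IsSupportProj M p) (hM : M.PosSemidef) :
    (M + (1 - p)).PosDef := by
  have hq : (1 - p)ᴴ * (1 - p) = 1 - p := by
    rw [conjTranspose_sub, conjTranspose_one, hp.1.eq, Matrix.mul_sub, Matrix.sub_mul,
      Matrix.sub_mul, hp.2.1]
    simp
  have hPSD : (M + (1 - p)).PosSemidef := hM.add (hq ▸ posSemidef_conjTranspose_mul_self _)
  refine hPSD.posDef_iff_isUnit.2 <| mulVec_injective_iff_isUnit.1 <|
    (injective_iff_map_eq_zero (M + (1 - p)).mulVecLin).2 fun v hv ↦ ?_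
  change (M + (1 - p)) *ᵥ v = 0 at hv
  have hMv : M *ᵥ v = 0 := by
    have hpM : p * (M + (1 - p)) = M := by
      rw [Matrix.mul_add, Matrix.mul_sub, hp.proj_mul, hp.2.1, Matrix.mul_one, sub_self,
        add_zero]
    rw [← hpM, ← mulVec_mulVec, hv, mulVec_zero]
  have hpv : p *ᵥ v = v := by
    rw [add_mulVec, hMv, zero_add, sub_mulVec, one_mulVec, sub_eq_zero] at hv
    exact hv.symm
  obtain ⟨w, rfl⟩ : ∃ w, M *ᵥ w = v := by
    have hv_range : v ∈ LinearMap.range (toLin' M) := hp.2.2 ▸ ⟨v, by rw [toLin'_apply, hpv]⟩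
    obtain ⟨w, hw⟩ := hv_range
    exact ⟨w, by rwa [toLin'_apply] at hw⟩
  -- `v` lies in both the range and the kernel of the Hermitian matrix `M`
  rw [← dotProduct_star_self_eq_zero, star_mulVec, ← dotProduct_mulVec, hM.1.eq, hMv,
    dotProduct_zero]

lemma eventually_posSemidef_add_smul (hp : IsSupportProj M p) (hM : M.PosSemidef)
    {X : Matrix n n ℂ} (hX : X.IsHermitian) (hXp : p * X * p = X) :
    ∀ᶠ s : ℝ in 𝓝 0, (M + s • X).PosSemidef := by
  filter_upwards [(hp.posDef_add_one_sub hM).isStrictlyPositive.eventually_nonneg_add_smul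
    hX.isSelfAdjoint] with s hs
  have hpMp : p * M * p = M := by rw [hp.proj_mul, hp.mul_proj hM.1]
  have hconj : star p * (M + (1 - p) + s • X) * p = M + s • X := by
    rw [star_eq_conjTranspose, hp.1.eq]
    simp only [Matrix.mul_add, Matrix.add_mul, Matrix.mul_sub, Matrix.mul_one,
      Matrix.mul_smul, Matrix.smul_mul, hp.2.1, hpMp, hXp, sub_self, add_zero]
  simpa [hconj] using (star_left_conjugate_nonneg hs p).posSemidef

end IsSupportProj

lemma PositivelyGenerated.conjTranspose_mem {k : Type*} [Fintype k]
    {J : Submodule ℂ (Matrix k k ℂ)} (hJ : PositivelyGenerated J) {a : Matrix k k ℂ}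
    (ha : a ∈ J) : aᴴ ∈ J := by
  rw [hJ] at ha ⊢
  induction ha using Submodule.span_induction with
  | mem x hx => rw [hx.2.1.eq]; exact Submodule.subset_span hx
  | zero => simp
  | add x y _ _ hx hy => rw [conjTranspose_add]; exact add_mem hx hy
  | smul c x _ hx => rw [conjTranspose_smul]; exact Submodule.smul_mem _ _ hx

lemma conjTranspose_mem_hsPerp {k : Type*} [Fintype k] {J : Submodule ℂ (Matrix k k ℂ)}
    (hJ : ∀ a ∈ J, aᴴ ∈ J) {x : Matrix k k ℂ} (hx : x ∈ hsPerp J) : xᴴ ∈ hsPerp J := by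
  intro a ha
  have h := hx aᴴ (hJ a ha)
  rw [conjTranspose_conjTranspose] at h
  rw [← conjTranspose_mul, trace_conjTranspose, trace_mul_comm, h, star_zero]

def generalizedPOVMs {k : Type*} [Fintype k] [DecidableEq k] (J : Submodule ℂ (Matrix k k ℂ))
    (U : Type*) [Fintype U] : Set (U → Matrix k k ℂ) :=
  {N | (∀ u, (N u).PosSemidef) ∧ (∑ u, N u) - 1 ∈ hsPerp J}

section POVM

variable {k U : Type*} [Fintype k] [Fintype U]

def supportPerturbations (J : Submodule ℂ (Matrix k k ℂ)) (p : U → Matrix k k ℂ) :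
    Submodule ℂ (U → Matrix k k ℂ) where
  carrier := {D | (∀ u, p u * D u * p u = D u) ∧ ∑ u, D u ∈ hsPerp J}
  add_mem' {D E} hD hE := ⟨fun u ↦ by simp [Matrix.mul_add, Matrix.add_mul, hD.1 u, hE.1 u],
    by simpa [Finset.sum_add_distrib] using add_mem hD.2 hE.2⟩
  zero_mem' := ⟨fun u ↦ by simp, by simp⟩
  smul_mem' c D hD := ⟨fun u ↦ by simp [hD.1 u],
    by simpa [Finset.smul_sum] using Submodule.smul_mem _ c hD.2⟩

lemma star_mem_supportPerturbations {J : Submodule ℂ (Matrix k k ℂ)} (hJ : ∀ a ∈ J, aᴴ ∈ J)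
    {p : U → Matrix k k ℂ} (hp : ∀ u, (p u).IsHermitian) {D : U → Matrix k k ℂ}
    (hD : D ∈ supportPerturbations J p) : star D ∈ supportPerturbations J p := by
  refine ⟨fun u ↦ ?_, ?_⟩
  · simpa [star_eq_conjTranspose, conjTranspose_mul, (hp u).eq, Matrix.mul_assoc]
      using congrArg (·ᴴ) (hD.1 u)
  · simpa [star_eq_conjTranspose, conjTranspose_sum] using conjTranspose_mem_hsPerp hJ hD.2

variable [DecidableEq k] {J : Submodule ℂ (Matrix k k ℂ)} {M p : U → Matrix k k ℂ}

lemma eq_zero_of_mem_extremePoints_of_isSelfAdjoint (hM : M ∈ generalizedPOVMs J U)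
    (hp : ∀ u, IsSupportProj (M u) (p u)) (hext : M ∈ (generalizedPOVMs J U).extremePoints ℝ)
    {D : U → Matrix k k ℂ} (hD : D ∈ supportPerturbations J p) (hDsa : IsSelfAdjoint D) :
    D = 0 := by
  have hev : ∀ᶠ s : ℝ in 𝓝 0, M + s • D ∈ generalizedPOVMs J U := by
    filter_upwards [Filter.eventually_all.2 fun u ↦ (hp u).eventually_posSemidef_add_smul
      (hM.1 u) (hDsa.apply u) (hD.1 u)] with s hs
    refine ⟨hs, ?_⟩
    have hsum : ∑ u, (M + s • D) u - 1 = (∑ u, M u - 1) + s • ∑ u, D u := by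
      simp only [Pi.add_apply, Pi.smul_apply, Finset.sum_add_distrib, Finset.smul_sum]
      abel
    rw [hsum]
    exact add_mem hM.2 (Submodule.smul_of_tower_mem _ s hD.2)
  have hev_neg : ∀ᶠ s : ℝ in 𝓝 0, M + (-s) • D ∈ generalizedPOVMs J U :=
    (continuous_neg.tendsto' (0 : ℝ) 0 neg_zero).eventually hev
  obtain ⟨s, ⟨hadd, hsub⟩, hs⟩ :=
    (((hev.and hev_neg).filter_mono nhdsWithin_le_nhds).and (self_mem_nhdsWithin :
      ∀ᶠ s : ℝ in 𝓝[≠] 0, s ≠ 0)).exists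
  rw [neg_smul, ← sub_eq_add_neg] at hsub
  have hsD : s • D = 0 := eq_zero_of_add_mem_of_sub_mem_of_mem_extremePoints hext hadd hsub
  exact (smul_eq_zero.1 hsD).resolve_left hs

lemma sub_mem_supportPerturbations_of_mem_openSegment (hM : M ∈ generalizedPOVMs J U)
    (hp : ∀ u, IsSupportProj (M u) (p u)) {N₁ N₂ : U → Matrix k k ℂ}
    (hN₁ : N₁ ∈ generalizedPOVMs J U) (hN₂ : N₂ ∈ generalizedPOVMs J U)
    (hseg : M ∈ openSegment ℝ N₁ N₂) : N₁ - M ∈ supportPerturbations J p := by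
  obtain ⟨a, b, ha, hb, -, hMab⟩ := hseg
  refine ⟨fun u ↦ (hp u).proj_mul_proj_of_ker_le (hM.1 u).1 ((hN₁.1 u).1.sub (hM.1 u).1)
    fun v hv ↦ ?_, ?_⟩
  · have hle : (M u - a • N₁ u).PosSemidef := by
      rw [← hMab, Pi.add_apply, Pi.smul_apply, Pi.smul_apply, add_sub_cancel_left]
      exact (hN₂.1 u).smul hb.le
    have haN := ((hN₁.1 u).smul ha.le).mulVec_eq_zero_of_le hle hv
    rw [smul_mulVec, smul_eq_zero] at haN
    rw [Pi.sub_apply, sub_mulVec, haN.resolve_left ha.ne', hv, sub_zero]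
  · have hsum : ∑ u, (N₁ - M) u = (∑ u, N₁ u - 1) - (∑ u, M u - 1) := by
      simp only [Pi.sub_apply, Finset.sum_sub_distrib]
      abel
    rw [hsum]
    exact sub_mem hN₁.2 hM.2

end POVM

theorem extreme_gPOVM_iff_general
    (J : Submodule ℂ (Matrix n n ℂ)) (hJ : PositivelyGenerated J)
    {U : Type*} [Fintype U]
    (M : U → Matrix n n ℂ) (p : U → Matrix n n ℂ)
    (hM : (∀ u, (M u).PosSemidef) ∧ (∑ u, M u) - 1 ∈ hsPerp J)
    (hp : ∀ u, IsSupportProj (M u) (p u)) :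
    M ∈ Set.extremePoints ℝ
        {N : U → Matrix n n ℂ |
          (∀ u, (N u).PosSemidef) ∧ (∑ u, N u) - 1 ∈ hsPerp J} ↔
      ∀ D : U → Matrix n n ℂ, (∀ u, p u * D u * p u = D u) →
        (∑ u, D u) ∈ hsPerp J → ∀ u, D u = 0 := by
  change M ∈ (generalizedPOVMs J U).extremePoints ℝ ↔ _
  constructor
  · intro hext D hDp hDperp
    have hstar : ∀ D ∈ supportPerturbations J p, star D ∈ supportPerturbations J p :=
      fun _ ↦ star_mem_supportPerturbations (fun _ ↦ hJ.conjTranspose_mem) fun u ↦ (hp u).1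
    exact congrFun <| Submodule.eq_zero_of_forall_isSelfAdjoint hstar
      (fun _ ↦ eq_zero_of_mem_extremePoints_of_isSelfAdjoint hM hp hext) ⟨hDp, hDperp⟩
  · intro hrigid
    refine ⟨hM, fun N₁ hN₁ N₂ hN₂ hseg ↦ ?_⟩
    obtain ⟨hcorner, hperp⟩ :=
      sub_mem_supportPerturbations_of_mem_openSegment hM hp hN₁ hN₂ hseg
    exact sub_eq_zero.1 (funext (hrigid _ hcorner hperp))

/-- a generalized POVM `M` w.r.t. `J`, with support projections
`p_u = supp(M_u)`, is an extreme point of the set `M_J(A,U)` of generalized POVMs iff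
for every collection `D_u ∈ p_u A p_u`, `Σ_u D_u ∈ J^⊥` implies `D_u = 0` for all `u`. -/
theorem extreme_gPOVM_iff
    (J : Submodule ℂ (Matrix n n ℂ)) (hJ : PositivelyGenerated J)
    (hinv : ∃ a ∈ J, a.PosDef)
    {U : Type*} [Fintype U]
    (M : U → Matrix n n ℂ) (p : U → Matrix n n ℂ)
    (hM : (∀ u, (M u).PosSemidef) ∧ (∑ u, M u) - 1 ∈ hsPerp J)
    (hp : ∀ u, IsSupportProj (M u) (p u)) :
    M ∈ Set.extremePoints ℝ
        {N : U → Matrix n n ℂ |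
          (∀ u, (N u).PosSemidef) ∧ (∑ u, N u) - 1 ∈ hsPerp J} ↔
      ∀ D : U → Matrix n n ℂ, (∀ u, p u * D u * p u = D u) →
        (∑ u, D u) ∈ hsPerp J → ∀ u, D u = 0 :=
  extreme_gPOVM_iff_general J hJ M p hM hp
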